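/- The Spaltenstein map is surjective: let e be a nilpotent endomorphism of an N-dimensional 𝕜-vector space V of Jordan type λ ⊢ N. Then for every standard tableau τ ∈ Std(λ) there exists a full flag F_• of V with e(F_i) ⊆ F_{i-1} for all i ≥ 1 and Φ(F_•) = τ. -/

import Mathlib

/-- A list of naturals is a partition: non-increasing with positive parts. -/
def IsPartitionL (μ : List ℕ) : Prop :=
  μ.Pairwise (· ≥ ·) ∧ ∀ x ∈ μ, 0 < x

/-- A standard tableau of shape `μ` (a partition of `μ.sum`), given as a function on
0-indexed boxes `(r, c)` with `r < μ.length` and `c < μ.getD r 0`: the entries are exactly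
`{1, ..., μ.sum}` each occurring once, strictly increasing along rows and down columns. -/
structure IsStdTableau (μ : List ℕ) (T : ℕ → ℕ → ℕ) : Prop where
  entry_mem : ∀ r c, r < μ.length → c < μ.getD r 0 → 1 ≤ T r c ∧ T r c ≤ μ.sum
  exists_box : ∀ a, 1 ≤ a → a ≤ μ.sum → ∃ r c, r < μ.length ∧ c < μ.getD r 0 ∧ T r c = a
  inj : ∀ r c r' c', r < μ.length → c < μ.getD r 0 → r' < μ.length → c' < μ.getD r' 0 →
      T r c = T r' c' → r = r' ∧ c = c'
  row_lt : ∀ r c c', r < μ.length → c < c' → c' < μ.getD r 0 → T r c < T r c'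
  col_lt : ∀ r r' c, r < r' → r' < μ.length → c < μ.getD r' 0 → T r c < T r' c

/-- `shift μ k = λ_0 + ... + λ_{k-1}` where `λ_l = (μ l).sum`. -/
def shift (μ : ℕ → List ℕ) (k : ℕ) : ℕ := ∑ l ∈ Finset.range k, (μ l).sum

/-- The maximal number of parts among `μ 0, ..., μ (n-1)`. -/
def maxLen (n : ℕ) (μ : ℕ → List ℕ) : ℕ := (Finset.range n).sup fun k => (μ k).length

/-- The pointwise sum partition `μ^Σ`, with `j`-th part `Σ_{i<n} μ_{i,j}`. -/
def sumShape (n : ℕ) (μ : ℕ → List ℕ) : List ℕ :=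
  List.ofFn fun r : Fin (maxLen n μ) => ∑ k ∈ Finset.range n, (μ k).getD (r : ℕ) 0

/-- Row `r` of the stacked filling: the concatenation over `k = 0, ..., n-1` of row `r`
of `T k`, with every entry of the `k`-th row increased by `λ_0 + ... + λ_{k-1}`. -/
def stkRow (n : ℕ) (μ : ℕ → List ℕ) (T : ℕ → ℕ → ℕ → ℕ) (r : ℕ) : List ℕ :=
  ((List.range n).map fun k =>
    (List.range ((μ k).getD r 0)).map fun c => T k r c + shift μ k).flatten

/-- The entry of the stacked filling `stk (T 0, ..., T (n-1))` in box `(r, c)`. -/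
def stkEntry (n : ℕ) (μ : ℕ → List ℕ) (T : ℕ → ℕ → ℕ → ℕ) (r c : ℕ) : ℕ :=
  (stkRow n μ T r).getD c 0

/-- The number of entries `a ∈ {1,...,i}` of the tableau `T` of shape `μ` lying in the
first `p` columns (0-indexed columns `c < p`). -/
noncomputable def entriesInCols (μ : List ℕ) (T : ℕ → ℕ → ℕ) (i p : ℕ) : ℕ :=
  Set.ncard {a : ℕ | 1 ≤ a ∧ a ≤ i ∧
    ∃ r c, r < μ.length ∧ c < μ.getD r 0 ∧ c < p ∧ T r c = a}

section LinearDefs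

variable {𝕜 V : Type*} [Field 𝕜] [AddCommGroup V] [Module 𝕜 V]

/-- A full flag `0 = F 0 ⊂ F 1 ⊂ ... ⊂ F N = V` of an `N`-dimensional space. -/
structure IsFullFlag (N : ℕ) (F : ℕ → Submodule 𝕜 V) : Prop where
  mono : Monotone F
  bot : F 0 = ⊥
  top : F N = ⊤
  dim : ∀ i ≤ N, Module.finrank 𝕜 ↥(F i) = i

/-- A full flag `0 = F 0 ⊂ F 1 ⊂ ... ⊂ F l = U` of an `l`-dimensional subspace `U ⊆ V`. -/
structure IsFlagOf (U : Submodule 𝕜 V) (l : ℕ) (F : ℕ → Submodule 𝕜 V) : Prop where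
  mono : Monotone F
  le : ∀ d, F d ≤ U
  bot : F 0 = ⊥
  top : F l = U
  dim : ∀ d ≤ l, Module.finrank 𝕜 ↥(F d) = d

/-- `V = V_0 ⊕ ... ⊕ V_{n-1}` is an internal direct sum decomposition with
`dim V_k = lam k`. -/
structure IsDecomp (n : ℕ) (lam : ℕ → ℕ) (Vsub : ℕ → Submodule 𝕜 V) : Prop where
  dim : ∀ k < n, Module.finrank 𝕜 ↥(Vsub k) = lam k
  indep : ∀ k < n, Disjoint (Vsub k) (∑ l ∈ (Finset.range n).erase k, Vsub l)
  total : ∑ k ∈ Finset.range n, Vsub k = ⊤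

/-- Partial sums `lam 0 + ... + lam (k-1)`. -/
def pSum (lam : ℕ → ℕ) (k : ℕ) : ℕ := ∑ l ∈ Finset.range k, lam l

/-- For `1 ≤ i`, the (0-indexed) index `j` of the block containing position `i`, i.e. the
largest `j ≤ n` with `lam 0 + ... + lam (j-1) < i`. -/
def LSidx (n : ℕ) (lam : ℕ → ℕ) (i : ℕ) : ℕ :=
  Nat.findGreatest (fun j => pSum lam j < i) n

/-- The Lusztig–Spaltenstein flag: `F̄ i = W_{j-1} + F j d` where `j = LSidx n lam i` is the
block containing position `i`, `W_{j-1} = V_0 + ... + V_{j-1}` and `d = i - (lam 0 + ... + lam (j-1))`. -/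
def LSflag (n : ℕ) (lam : ℕ → ℕ) (Vsub : ℕ → Submodule 𝕜 V)
    (F : ℕ → ℕ → Submodule 𝕜 V) (i : ℕ) : Submodule 𝕜 V :=
  (∑ k ∈ Finset.range (LSidx n lam i), Vsub k) +
    F (LSidx n lam i) (i - pSum lam (LSidx n lam i))

end LinearDefs

/-!
Induction on `N`. The entry `N` of `τ` sits at the end of a row `r` of length `c + 1`. Because
`λ` has a row of length exactly `c + 1`, `p ↦ dim ker e^p` is strictly concave at `c + 1`, which
forces `ker e^(c+1) ⊄ im e + ker e^c`. A hyperplane `W ⊇ im e + ker e^c` missing a vector of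
`ker e^(c+1)` is `e`-stable, and `e|_W` has Jordan type `λ` with the box `(r, c)` removed. A flag
of `W` for `τ` minus its entry `N`, completed by `F_N = V`, is the required flag.
-/

open Submodule LinearMap Module

def jordanKerDim (lam : List ℕ) (p : ℕ) : ℕ :=
  ∑ j ∈ Finset.range lam.length, min p (lam.getD j 0)

lemma jordanKerDim_add_le (lam : List ℕ) (p : ℕ) :
    jordanKerDim lam p + jordanKerDim lam (p + 2) ≤ 2 * jordanKerDim lam (p + 1) := by
  unfold jordanKerDim
  rw [← Finset.sum_add_distrib, Finset.mul_sum]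
  exact Finset.sum_le_sum fun j _ => by omega

lemma List.getD_set_of_lt {α : Type*} {l : List α} {r : ℕ} (hr : r < l.length) (a d : α)
    (j : ℕ) : (l.set r a).getD j d = if r = j then a else l.getD j d := by
  rcases lt_or_ge j l.length with hj | hj
  · rw [getD_eq_getElem _ _ (by simpa using hj), getElem_set, getD_eq_getElem _ _ hj]
  · rw [getD_eq_default _ _ (by simpa using hj), getD_eq_default _ _ hj, if_neg (by omega)]

section Corner

variable {lam : List ℕ} {r c : ℕ}

lemma List.sum_set_add_one (hr : r < lam.length) (hc : lam.getD r 0 = c + 1) :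
    (lam.set r c).sum + 1 = lam.sum := by
  induction lam generalizing r with
  | nil => simp at hr
  | cons a l ih =>
    cases r with
    | zero => simp_all; omega
    | succ r =>
      simp only [List.set_cons_succ, List.sum_cons, List.length_cons, List.getD_cons_succ] at *
      have := ih (by omega) hc
      omega

lemma lt_getD_set_iff (hr : r < lam.length) (hc : lam.getD r 0 = c + 1) (r' c' : ℕ) :
    c' < (lam.set r c).getD r' 0 ↔ c' < lam.getD r' 0 ∧ ¬(r' = r ∧ c' = c) := by
  rw [List.getD_set_of_lt hr]
  split_ifs with h
  · subst h
    omega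
  · exact ⟨fun h' => ⟨h', fun h'' => h h''.1.symm⟩, And.left⟩

lemma jordanKerDim_set_add (hr : r < lam.length) (hc : lam.getD r 0 = c + 1) (p : ℕ) :
    jordanKerDim (lam.set r c) p + (if c < p then 1 else 0) = jordanKerDim lam p := by
  have hrm := Finset.mem_range.mpr hr
  unfold jordanKerDim
  rw [List.length_set, ← Finset.sum_erase_add _ _ hrm, ← Finset.sum_erase_add _ _ hrm,
    List.getD_set_of_lt hr, if_pos rfl, hc]
  have hrest : ∀ j ∈ (Finset.range lam.length).erase r,
      min p ((lam.set r c).getD j 0) = min p (lam.getD j 0) := fun j hj => by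
    rw [List.getD_set_of_lt hr, if_neg (Finset.ne_of_mem_erase hj).symm]
  rw [Finset.sum_congr rfl hrest]
  split_ifs <;> omega

lemma jordanKerDim_add_lt (hr : r < lam.length) (hc : lam.getD r 0 = c + 1) :
    jordanKerDim lam c + jordanKerDim lam (c + 2) < 2 * jordanKerDim lam (c + 1) := by
  have h0 := jordanKerDim_set_add hr hc c
  have h1 := jordanKerDim_set_add hr hc (c + 1)
  have h2 := jordanKerDim_set_add hr hc (c + 2)
  rw [if_neg (lt_irrefl c)] at h0
  rw [if_pos (by omega)] at h1 h2
  have := jordanKerDim_add_le (lam.set r c) c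
  omega

end Corner

lemma entriesInCols_zero (lam : List ℕ) (τ : ℕ → ℕ → ℕ) (p : ℕ) :
    entriesInCols lam τ 0 p = 0 := by
  unfold entriesInCols
  convert Set.ncard_empty ℕ
  ext a
  simp only [Set.mem_ofPred_eq, Set.mem_empty_iff_false, iff_false]
  omega

lemma entriesInCols_set {lam : List ℕ} {τ : ℕ → ℕ → ℕ} {r c : ℕ} (hr : r < lam.length)
    (hc : lam.getD r 0 = c + 1) (hval : τ r c = lam.sum) {i : ℕ} (hi : i < lam.sum) (p : ℕ) :
    entriesInCols (lam.set r c) τ i p = entriesInCols lam τ i p := by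
  unfold entriesInCols
  congr 1
  ext a
  simp only [Set.mem_ofPred_eq, List.length_set, lt_getD_set_iff hr hc]
  constructor
  · rintro ⟨h1, h2, r', c', hr', ⟨hc', -⟩, hcp, rfl⟩
    exact ⟨h1, h2, r', c', hr', hc', hcp, rfl⟩
  · rintro ⟨h1, h2, r', c', hr', hc', hcp, rfl⟩
    refine ⟨h1, h2, r', c', hr', ⟨hc', ?_⟩, hcp, rfl⟩
    rintro ⟨rfl, rfl⟩
    omega

namespace IsStdTableau

variable {lam : List ℕ} {τ : ℕ → ℕ → ℕ}

lemma getD_eq_of_eq_sum (hτ : IsStdTableau lam τ) {r c : ℕ} (hr : r < lam.length)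
    (hcb : c < lam.getD r 0) (hval : τ r c = lam.sum) : lam.getD r 0 = c + 1 := by
  by_contra h
  have hnext : c + 1 < lam.getD r 0 := by omega
  have := hτ.row_lt r c (c + 1) hr (by omega) hnext
  have := (hτ.entry_mem r (c + 1) hr hnext).2
  omega

lemma set (hτ : IsStdTableau lam τ) {r c : ℕ} (hr : r < lam.length)
    (hc : lam.getD r 0 = c + 1) (hval : τ r c = lam.sum) : IsStdTableau (lam.set r c) τ := by
  have hsum := List.sum_set_add_one hr hc
  have hbox := lt_getD_set_iff hr hc
  have hsub : ∀ r' c', c' < (lam.set r c).getD r' 0 → c' < lam.getD r' 0 :=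
    fun r' c' h => ((hbox r' c').1 h).1
  constructor
  · intro r' c' hr' hc'
    rw [List.length_set] at hr'
    obtain ⟨hc', hne⟩ := (hbox r' c').1 hc'
    have hlt : τ r' c' ≠ lam.sum := fun h =>
      hne (hτ.inj r' c' r c hr' hc' hr (by omega) (h.trans hval.symm))
    have := hτ.entry_mem r' c' hr' hc'
    omega
  · intro a ha1 ha2
    obtain ⟨r', c', hr', hc', rfl⟩ := hτ.exists_box a ha1 (by omega)
    refine ⟨r', c', by rwa [List.length_set], (hbox r' c').2 ⟨hc', ?_⟩, rfl⟩
    rintro ⟨rfl, rfl⟩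
    omega
  · intro r₁ c₁ r₂ c₂ h₁ h₂ h₃ h₄
    rw [List.length_set] at h₁ h₃
    exact hτ.inj r₁ c₁ r₂ c₂ h₁ (hsub _ _ h₂) h₃ (hsub _ _ h₄)
  · intro r' c₁ c₂ h₁ h₂ h₃
    rw [List.length_set] at h₁
    exact hτ.row_lt r' c₁ c₂ h₁ h₂ (hsub _ _ h₃)
  · intro r₁ r₂ c' h₁ h₂ h₃
    rw [List.length_set] at h₂
    exact hτ.col_lt r₁ r₂ c' h₁ h₂ (hsub _ _ h₃)

lemma entriesInCols_sum (hτ : IsStdTableau lam τ) (p : ℕ) :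
    entriesInCols lam τ lam.sum p = jordanKerDim lam p := by
  classical
  let boxes : Finset ((_ : ℕ) × ℕ) :=
    (Finset.range lam.length).sigma fun r => Finset.range (min p (lam.getD r 0))
  have hset : {a : ℕ | 1 ≤ a ∧ a ≤ lam.sum ∧
      ∃ r c, r < lam.length ∧ c < lam.getD r 0 ∧ c < p ∧ τ r c = a} =
      ↑(boxes.image fun x => τ x.1 x.2) := by
    ext a
    simp only [boxes, Set.mem_ofPred_eq, Finset.coe_image, Set.mem_image, Finset.mem_coe,
      Finset.mem_sigma, Finset.mem_range, lt_min_iff]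
    constructor
    · rintro ⟨-, -, r, c, hr, hc, hcp, rfl⟩
      exact ⟨⟨r, c⟩, ⟨hr, hcp, hc⟩, rfl⟩
    · rintro ⟨⟨r, c⟩, ⟨hr, hcp, hc⟩, rfl⟩
      exact ⟨(hτ.entry_mem r c hr hc).1, (hτ.entry_mem r c hr hc).2, r, c, hr, hc, hcp, rfl⟩
  unfold entriesInCols
  rw [hset, Set.ncard_coe_finset, Finset.card_image_of_injOn, Finset.card_sigma]
  · simp [jordanKerDim]
  · rintro ⟨r, c⟩ h ⟨r', c'⟩ h' heq
    simp only [boxes, Finset.coe_sigma, Set.mem_sigma_iff, Finset.coe_range, Set.mem_Iio,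
      lt_min_iff] at h h'
    obtain ⟨rfl, rfl⟩ := hτ.inj r c r' c' h.1 h.2.2 h'.1 h'.2.2 heq
    rfl

end IsStdTableau

section LinearAlgebra

variable {𝕜 V : Type*} [Field 𝕜] [AddCommGroup V] [Module 𝕜 V]

lemma Submodule.finrank_comap_subtype (K X : Submodule 𝕜 V) :
    finrank 𝕜 (comap K.subtype X) = finrank 𝕜 ↥(K ⊓ X) := by
  rw [← finrank_map_subtype_eq K, map_comap_subtype]

variable (e : Module.End 𝕜 V)

lemma ker_pow_le_ker_pow {p q : ℕ} (h : p ≤ q) : ker (e ^ p) ≤ ker (e ^ q) := by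
  obtain ⟨k, rfl⟩ := Nat.exists_eq_add_of_le h
  rw [add_comm, pow_add]
  exact ker_le_ker_comp (e ^ p) (e ^ k)

lemma range_inf_ker_pow (p : ℕ) : range e ⊓ ker (e ^ p) = map e (ker (e ^ (p + 1))) := by
  ext x
  simp only [Submodule.mem_inf, mem_range, mem_ker, Submodule.mem_map, pow_succ,
    Module.End.mul_apply]
  constructor
  · rintro ⟨⟨y, rfl⟩, hx⟩
    exact ⟨y, hx, rfl⟩
  · rintro ⟨y, hy, rfl⟩
    exact ⟨⟨y, rfl⟩, hy⟩

lemma ker_pow_restrict {W : Submodule 𝕜 V} (h : ∀ x ∈ W, e x ∈ W) (p : ℕ) :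
    ker (e.restrict h ^ p) = comap W.subtype (ker (e ^ p)) := by
  rw [Module.End.pow_restrict, ker_restrict]

section Flag

variable {W : Submodule 𝕜 V} {n : ℕ} {G : ℕ → Submodule 𝕜 W}

def extendFlag (W : Submodule 𝕜 V) (n : ℕ) (G : ℕ → Submodule 𝕜 W) (i : ℕ) : Submodule 𝕜 V :=
  if i ≤ n then (G i).map W.subtype else ⊤

lemma extendFlag_of_le {i : ℕ} (hi : i ≤ n) : extendFlag W n G i = (G i).map W.subtype :=
  if_pos hi

lemma extendFlag_of_lt {i : ℕ} (hi : n < i) : extendFlag W n G i = ⊤ :=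
  if_neg (by omega)

lemma isFullFlag_extendFlag (hG : IsFullFlag n G) (hV : finrank 𝕜 V = n + 1) :
    IsFullFlag (n + 1) (extendFlag W n G) where
  mono i j hij := by
    rcases le_or_gt j n with hj | hj
    · rw [extendFlag_of_le hj, extendFlag_of_le (hij.trans hj)]
      exact map_mono (hG.mono hij)
    · rw [extendFlag_of_lt hj]
      exact le_top
  bot := by rw [extendFlag_of_le n.zero_le, hG.bot, Submodule.map_bot]
  top := extendFlag_of_lt n.lt_succ_self
  dim i hi := by
    rcases le_or_gt i n with hin | hin
    · rw [extendFlag_of_le hin, finrank_map_subtype_eq, hG.dim i hin]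
    · rw [extendFlag_of_lt hin, finrank_top]
      omega

lemma map_extendFlag_succ_le (he : range e ≤ W)
    (hGe : ∀ i, map (e.restrict fun x _ => he (mem_range_self e x)) (G (i + 1)) ≤ G i)
    (hGtop : G n = ⊤) (i : ℕ) : map e (extendFlag W n G (i + 1)) ≤ extendFlag W n G i := by
  rcases lt_trichotomy i n with hi | rfl | hi
  · have hcomm : e ∘ₗ W.subtype =
        W.subtype ∘ₗ e.restrict fun x _ => he (mem_range_self e x) := rfl
    rw [extendFlag_of_le hi, extendFlag_of_le hi.le, ← map_comp, hcomm, map_comp]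
    exact map_mono (hGe i)
  · rw [extendFlag_of_lt i.lt_succ_self, extendFlag_of_le le_rfl, hGtop, Submodule.map_top,
      Submodule.map_top, range_subtype]
    exact he
  · rw [extendFlag_of_lt hi]
    exact le_top

lemma finrank_extendFlag_inf {i : ℕ} (hi : i ≤ n) (X : Submodule 𝕜 V) :
    finrank 𝕜 ↥(extendFlag W n G i ⊓ X) = finrank 𝕜 ↥(G i ⊓ comap W.subtype X) := by
  rw [extendFlag_of_le hi, map_inf_eq_map_inf_comap, finrank_map_subtype_eq]

end Flag

variable [FiniteDimensional 𝕜 V]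

lemma finrank_map_add_finrank_inf_ker {V₂ : Type*} [AddCommGroup V₂] [Module 𝕜 V₂]
    (f : V →ₗ[𝕜] V₂) (A : Submodule 𝕜 V) :
    finrank 𝕜 (map f A) + finrank 𝕜 ↥(A ⊓ ker f) = finrank 𝕜 A := by
  have := finrank_range_add_finrank_ker (f.domRestrict A)
  rwa [range_domRestrict, ker_domRestrict, finrank_comap_subtype] at this

lemma finrank_ker_inf_add_one (f : Dual 𝕜 V) {K : Submodule 𝕜 V} {v : V} (hv : v ∈ K)
    (hfv : f v ≠ 0) : finrank 𝕜 ↥(ker f ⊓ K) + 1 = finrank 𝕜 K := by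
  have hf : f.domRestrict K ≠ 0 := fun h => hfv (by simpa using LinearMap.congr_fun h ⟨v, hv⟩)
  have := Dual.finrank_ker_add_one_of_ne_zero hf
  rwa [ker_domRestrict, finrank_comap_subtype, inf_comm] at this

lemma finrank_range_sup_ker_pow (p : ℕ) :
    finrank 𝕜 ↥(range e ⊔ ker (e ^ p)) + finrank 𝕜 (ker (e ^ (p + 1))) =
      finrank 𝕜 V + finrank 𝕜 (ker (e ^ p)) := by
  have hsup := Submodule.finrank_sup_add_finrank_inf_eq (range e) (ker (e ^ p))
  have hmap := finrank_map_add_finrank_inf_ker e (ker (e ^ (p + 1)))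
  rw [inf_eq_right.mpr (by simpa using ker_pow_le_ker_pow e (by omega : 1 ≤ p + 1))] at hmap
  rw [range_inf_ker_pow] at hsup
  have := finrank_range_add_finrank_ker e
  omega

theorem exists_hyperplane_jordanKerDim_set {lam : List ℕ}
    (htype : ∀ p, finrank 𝕜 (ker (e ^ p)) = jordanKerDim lam p) {r c : ℕ}
    (hr : r < lam.length) (hc : lam.getD r 0 = c + 1) :
    ∃ W : Submodule 𝕜 V, range e ≤ W ∧ finrank 𝕜 W + 1 = finrank 𝕜 V ∧
      ∀ p, finrank 𝕜 ↥(W ⊓ ker (e ^ p)) = jordanKerDim (lam.set r c) p := by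
  have hnle : ¬ ker (e ^ (c + 1)) ≤ range e ⊔ ker (e ^ c) := fun hle => by
    have := finrank_mono (sup_le le_sup_left hle : range e ⊔ ker (e ^ (c + 1)) ≤ _)
    have := finrank_range_sup_ker_pow e c
    have := finrank_range_sup_ker_pow e (c + 1)
    have := jordanKerDim_add_lt hr hc
    simp only [htype, add_assoc, Nat.reduceAdd] at *
    omega
  obtain ⟨v, hv, hvU⟩ := SetLike.not_le_iff_exists.mp hnle
  obtain ⟨f, hfv, hUf⟩ := exists_le_ker_of_notMem hvU
  refine ⟨ker f, le_sup_left.trans hUf, ?_, fun p => ?_⟩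
  · have := finrank_ker_inf_add_one f (mem_top : v ∈ ⊤) hfv
    rwa [inf_top_eq, finrank_top] at this
  · have hset := jordanKerDim_set_add hr hc p
    by_cases hp : c < p
    · have := finrank_ker_inf_add_one f (ker_pow_le_ker_pow e hp hv) hfv
      rw [if_pos hp] at hset
      rw [htype] at this
      omega
    · rw [if_neg hp] at hset
      rw [inf_eq_right.mpr ((ker_pow_le_ker_pow e (not_lt.mp hp)).trans
        (le_sup_right.trans hUf)), htype]
      omega

end LinearAlgebra

theorem exists_flag_entriesInCols {𝕜 : Type*} [Field 𝕜] {V : Type*} [AddCommGroup V]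
    [Module 𝕜 V] [FiniteDimensional 𝕜 V] {lam : List ℕ} {τ : ℕ → ℕ → ℕ}
    (hτ : IsStdTableau lam τ) (e : Module.End 𝕜 V) (hdim : finrank 𝕜 V = lam.sum)
    (htype : ∀ p, finrank 𝕜 (ker (e ^ p)) = jordanKerDim lam p) :
    ∃ F : ℕ → Submodule 𝕜 V, IsFullFlag lam.sum F ∧ (∀ i, map e (F (i + 1)) ≤ F i) ∧
      ∀ i ≤ lam.sum, ∀ p, finrank 𝕜 ↥(F i ⊓ ker (e ^ p)) = entriesInCols lam τ i p := by
  obtain ⟨n, hn⟩ : ∃ n, lam.sum = n := ⟨_, rfl⟩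
  rw [hn] at hdim ⊢
  induction n generalizing V lam τ with
  | zero =>
    have hbot : (⊥ : Submodule 𝕜 V) = ⊤ := (finrank_eq_zero.mp (by rwa [finrank_top])).symm
    refine ⟨fun _ => ⊥, ⟨monotone_const, rfl, hbot, fun i hi => ?_⟩, fun i => ?_,
      fun i hi p => ?_⟩
    · rw [finrank_bot]; omega
    · rw [Submodule.map_bot]
    · rw [Nat.le_zero.mp hi, bot_inf_eq, finrank_bot, entriesInCols_zero]
  | succ n ih =>
    obtain ⟨r, c, hr, hcb, hval⟩ := hτ.exists_box lam.sum (by omega) le_rfl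
    have hc := hτ.getD_eq_of_eq_sum hr hcb hval
    have hsum := List.sum_set_add_one hr hc
    obtain ⟨W, he, hWdim, hWtype⟩ := exists_hyperplane_jordanKerDim_set e htype hr hc
    have hWe : ∀ x ∈ W, e x ∈ W := fun x _ => he (mem_range_self e x)
    obtain ⟨G, hG, hGe, hGτ⟩ := ih (hτ.set hr hc hval) (e.restrict hWe)
      (fun p => by rw [ker_pow_restrict, finrank_comap_subtype, hWtype]) (by omega) (by omega)
    refine ⟨extendFlag W n G, isFullFlag_extendFlag hG hdim,
      map_extendFlag_succ_le e he hGe hG.top, fun i hi p => ?_⟩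
    rcases hi.lt_or_eq with hi | rfl
    · rw [finrank_extendFlag_inf (by omega), ← ker_pow_restrict e hWe, hGτ i (by omega) p,
        entriesInCols_set hr hc hval (by omega)]
    · rw [extendFlag_of_lt n.lt_succ_self, top_inf_eq, htype, ← hn, hτ.entriesInCols_sum]

theorem spaltenstein_map_surjective_general
    {𝕜 V : Type*} [Field 𝕜] [AddCommGroup V] [Module 𝕜 V] [FiniteDimensional 𝕜 V]
    (N : ℕ) (lam : List ℕ) (hsum : lam.sum = N)
    (hdim : Module.finrank 𝕜 V = N)
    (e : V →ₗ[𝕜] V)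
    (htype : ∀ p : ℕ, Module.finrank 𝕜 ↥(LinearMap.ker (e ^ p)) =
      ∑ j ∈ Finset.range lam.length, min p (lam.getD j 0))
    (τ : ℕ → ℕ → ℕ) (hτ : IsStdTableau lam τ) :
    ∃ F : ℕ → Submodule 𝕜 V, IsFullFlag N F ∧
      (∀ i, Submodule.map e (F (i + 1)) ≤ F i) ∧
      ∀ i ≤ N, ∀ p : ℕ,
        Module.finrank 𝕜 ↥(F i ⊓ LinearMap.ker (e ^ p)) = entriesInCols lam τ i p := by
  subst hsum
  exact exists_flag_entriesInCols hτ e hdim htype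

/-- The Spaltenstein map is surjective: for a nilpotent `e` of Jordan type
`λ ⊢ N` and any standard tableau `τ ∈ Std(λ)`, there is a full flag `F` in the Springer
fibre of `e` with `Φ(F) = τ`. -/
theorem spaltenstein_map_surjective
    {𝕜 V : Type*} [Field 𝕜] [AddCommGroup V] [Module 𝕜 V] [FiniteDimensional 𝕜 V]
    (N : ℕ) (lam : List ℕ) (hlam : IsPartitionL lam) (hsum : lam.sum = N)
    (hdim : Module.finrank 𝕜 V = N)
    (e : V →ₗ[𝕜] V) (henil : IsNilpotent e)
    (htype : ∀ p : ℕ, Module.finrank 𝕜 ↥(LinearMap.ker (e ^ p)) =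
      ∑ j ∈ Finset.range lam.length, min p (lam.getD j 0))
    (τ : ℕ → ℕ → ℕ) (hτ : IsStdTableau lam τ) :
    ∃ F : ℕ → Submodule 𝕜 V, IsFullFlag N F ∧
      (∀ i, Submodule.map e (F (i + 1)) ≤ F i) ∧
      ∀ i ≤ N, ∀ p : ℕ,
        Module.finrank 𝕜 ↥(F i ⊓ LinearMap.ker (e ^ p)) = entriesInCols lam τ i p :=
  spaltenstein_map_surjective_general N lam hsum hdim e htype τ hτ
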